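/- arXiv:2403.14378 — 2 statements merged into one kernel-verified Lean document; each statement's English description precedes it below -/
import Mathlib

section
/- For every positive natural number n there exists a zero-dimensional scattered separable metrizable space that is n-homogeneous but not ℓ-homogeneous for any ℓ < n; a witness is the ordinal ω^n equipped with the order topology. -/
open TopologicalSpace MeasureTheory Topology

/-- A space is *homogeneous* if its homeomorphism group acts transitively. -/
def HomogeneousSpace (X : Type*) [TopologicalSpace X] : Prop :=
  ∀ x y : X, ∃ h : X ≃ₜ X, h x = y

/-- A subset is a *homogeneous subspace* if it is homogeneous in the subspace topology. -/
def HomogeneousSubspace {X : Type*} [TopologicalSpace X] (S : Set X) : Prop :=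
  ∀ x y : S, ∃ h : ↥S ≃ₜ ↥S, h x = y

/-- A space is *zero-dimensional* if the clopen sets form a base. -/
def ZeroDimensionalSpace (X : Type*) [TopologicalSpace X] : Prop :=
  IsTopologicalBasis {s : Set X | IsClopen s}

/-- A space is *analytic* if it embeds onto an analytic subset of some Polish space. -/
def AnalyticSpace (X : Type*) [tX : TopologicalSpace X] : Prop :=
  ∃ (Z : Type) (tZ : TopologicalSpace Z), @PolishSpace Z tZ ∧
    ∃ j : X → Z, @IsEmbedding X Z tX tZ j ∧ @AnalyticSet Z tZ (Set.range j)

/-- A space is *coanalytic* if it embeds onto the complement of an analytic subset of some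
Polish space. -/
def CoanalyticSpace (X : Type*) [tX : TopologicalSpace X] : Prop :=
  ∃ (Z : Type) (tZ : TopologicalSpace Z), @PolishSpace Z tZ ∧
    ∃ j : X → Z, @IsEmbedding X Z tX tZ j ∧ @AnalyticSet Z tZ (Set.range j)ᶜ

/-- A space is *Borel* if it embeds onto a Borel subset of some Polish space. -/
def BorelSpacePaper (X : Type*) [tX : TopologicalSpace X] : Prop :=
  ∃ (Z : Type) (tZ : TopologicalSpace Z), @PolishSpace Z tZ ∧
    ∃ j : X → Z, @IsEmbedding X Z tX tZ j ∧ @MeasurableSet Z (@borel Z tZ) (Set.range j)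

/-- `A ∈ Σ¹₁(X)`: for some embedding `j` of `X` into a Polish space `Z`, `j '' A` is the
trace on `j '' X` of an analytic subset of `Z`. -/
def RelativelyAnalytic {X : Type*} [tX : TopologicalSpace X] (A : Set X) : Prop :=
  ∃ (Z : Type) (tZ : TopologicalSpace Z), @PolishSpace Z tZ ∧
    ∃ j : X → Z, @IsEmbedding X Z tX tZ j ∧
      ∃ A' : Set Z, @AnalyticSet Z tZ A' ∧ j '' A = A' ∩ Set.range j

/-- A subset of a space is `Σ¹₂` if it is a continuous image of a coanalytic subset of a
Polish space. -/
def Sigma12Set {Z : Type*} [tZ : TopologicalSpace Z] (s : Set Z) : Prop :=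
  ∃ (W : Type) (tW : TopologicalSpace W), @PolishSpace W tW ∧
    ∃ (C : Set W) (f : W → Z), @AnalyticSet W tW Cᶜ ∧ @ContinuousOn W Z tW tZ f C ∧ f '' C = s

/-- `A ∈ Δ¹₂(X)`: for some embedding `j` of `X` into a Polish space `Z`, both `j '' A` and
`j '' Aᶜ` are traces on `j '' X` of `Σ¹₂` subsets of `Z`. -/
def RelativelyDelta12 {X : Type*} [tX : TopologicalSpace X] (A : Set X) : Prop :=
  ∃ (Z : Type) (tZ : TopologicalSpace Z), @PolishSpace Z tZ ∧
    ∃ j : X → Z, @IsEmbedding X Z tX tZ j ∧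
      (∃ A' : Set Z, @Sigma12Set Z tZ A' ∧ j '' A = A' ∩ Set.range j) ∧
      (∃ B' : Set Z, @Sigma12Set Z tZ B' ∧ j '' Aᶜ = B' ∩ Set.range j)

/-- A space is *meager* if it is a meager subset of itself. -/
def MeagerSpace (X : Type*) [TopologicalSpace X] : Prop :=
  IsMeagre (Set.univ : Set X)

/-- A space is *Baire* if no non-empty open subset of it is meager (the definition used in
the paper). -/
def PaperBaireSpace (X : Type*) [TopologicalSpace X] : Prop :=
  ∀ U : Set X, IsOpen U → U.Nonempty → ¬ IsMeagre U

/-- A space is *nowhere countable* if it is non-empty and no non-empty open subset of it is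
countable. -/
def NowhereCountable (X : Type*) [TopologicalSpace X] : Prop :=
  Nonempty X ∧ ∀ U : Set X, IsOpen U → U.Nonempty → ¬ U.Countable

/-- The iterated Cantor–Bendixson derivative of a space: `cbDeriv X 0 = X`,
`cbDeriv X (ξ+1)` is `cbDeriv X ξ` minus its isolated points, and intersections are taken
at limit stages. -/
noncomputable def cbDeriv (X : Type*) [TopologicalSpace X] (o : Ordinal.{0}) : Set X :=
  Ordinal.limitRecOn o Set.univ
    (fun _ ih => {x ∈ ih | x ∈ closure (ih \ {x})})
    (fun o _ ih => ⋂ (p : Set.Iio o), ih p.1 p.2)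

/-- A space is *scattered* if some iterated Cantor–Bendixson derivative of it is empty. -/
def ScatteredSpace (X : Type*) [TopologicalSpace X] : Prop :=
  ∃ o : Ordinal.{0}, cbDeriv X o = ∅

/-- A space is *n-discrete* if it is the union of `n` discrete subspaces. -/
def NDiscrete (n : ℕ) (X : Type*) [TopologicalSpace X] : Prop :=
  ∃ D : Fin n → Set X, (∀ k, DiscreteTopology ↥(D k)) ∧ ⋃ k, D k = Set.univ

/-- A space is *n-homogeneous* if it is the union of `n` homogeneous subspaces. -/
def NHomogeneous (n : ℕ) (X : Type*) [TopologicalSpace X] : Prop :=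
  ∃ Y : Fin n → Set X, (∀ k, HomogeneousSubspace (Y k)) ∧ ⋃ k, Y k = Set.univ

/-- A space is *σ-homogeneous* if it is the union of countably many homogeneous
subspaces. -/
def SigmaHomogeneous (X : Type*) [TopologicalSpace X] : Prop :=
  ∃ Y : ℕ → Set X, (∀ n, HomogeneousSubspace (Y n)) ∧ ⋃ n, Y n = Set.univ

/-- An `Fσ` subset: a countable union of closed sets. -/
def IsFsigma {X : Type*} [TopologicalSpace X] (s : Set X) : Prop :=
  ∃ F : ℕ → Set X, (∀ n, IsClosed (F n)) ∧ s = ⋃ n, F n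

/-!
A homogeneous subspace of an ordinal is discrete, because its least element is isolated in it.
So `ℓ`-homogeneity of `ω ^ n` amounts to being a union of `ℓ` discrete sets. In a union of `ℓ`
discrete sets, every neighbourhood of a point of the `k`-th Cantor–Bendixson derivative meets at
least `k + 1` of them, so the `ℓ`-th derivative is empty; but for `ℓ < n` the point `ω ^ ℓ` lies
in the `ℓ`-th derivative of `ω ^ n`. Conversely, every `x < ω ^ n` is `ω ^ i * c` with `i < n`
and `c` not a limit, and for fixed `i` these points form a discrete set.
-/

open Ordinal Set

section Topology

variable {X : Type*} [TopologicalSpace X]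

theorem HomogeneousSpace.isOpen_singleton (hX : HomogeneousSpace X) {x : X} (hx : IsOpen {x})
    (y : X) : IsOpen {y} := by
  obtain ⟨h, rfl⟩ := hX x y
  simpa using h.isOpenMap _ hx

theorem homogeneousSpace_of_discreteTopology [DiscreteTopology X] : HomogeneousSpace X := by
  classical
  exact fun x y => ⟨(Equiv.swap x y).toHomeomorphOfDiscrete, Equiv.swap_apply_left x y⟩

theorem NDiscrete.nHomogeneous {n : ℕ} (h : NDiscrete n X) : NHomogeneous n X :=
  let ⟨D, hD, hcov⟩ := h
  ⟨D, fun k => have := hD k; homogeneousSpace_of_discreteTopology, hcov⟩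

theorem ZeroDimensionalSpace.subtype (hX : ZeroDimensionalSpace X) (S : Set X) :
    ZeroDimensionalSpace S :=
  (hX.isInducing IsInducing.subtypeVal).of_isOpen_of_subset (fun _ hU => hU.isOpen)
    (by rintro _ ⟨U, hU, rfl⟩; exact hU.preimage continuous_subtype_val)

theorem cbDeriv_zero : cbDeriv X 0 = Set.univ :=
  limitRecOn_zero _ _ _

theorem cbDeriv_natCast_succ (k : ℕ) :
    cbDeriv X (k + 1 : ℕ) = {x ∈ cbDeriv X k | x ∈ closure (cbDeriv X k \ {x})} := by
  rw [Nat.cast_succ]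
  exact limitRecOn_add_one _ _ _ _

theorem exists_finset_lt_card_of_mem_cbDeriv [T1Space X] {ℓ : ℕ} {D : Fin ℓ → Set X}
    (hD : ∀ i, DiscreteTopology (D i)) (hcov : ⋃ i, D i = Set.univ) (k : ℕ) {x : X}
    (hx : x ∈ cbDeriv X k) {U : Set X} (hU : IsOpen U) (hxU : x ∈ U) :
    ∃ s : Finset (Fin ℓ), k < s.card ∧ ∀ i ∈ s, (U ∩ D i).Nonempty := by
  have hmem (x : X) : ∃ j, x ∈ D j := mem_iUnion.1 (hcov ▸ mem_univ x)
  induction k generalizing x U with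
  | zero =>
    obtain ⟨j, hj⟩ := hmem x
    exact ⟨{j}, by simp, by simpa using ⟨x, hxU, hj⟩⟩
  | succ k ih =>
    rw [cbDeriv_natCast_succ] at hx
    obtain ⟨j, hj⟩ := hmem x
    obtain ⟨V, hV, hVD⟩ := discreteTopology_subtype_iff'.1 (hD j) x hj
    have hxV : x ∈ V := (hVD.ge rfl).1
    obtain ⟨y, hyUV, hy, hyx⟩ := mem_closure_iff.1 hx.2 (U ∩ V) (hU.inter hV) ⟨hxU, hxV⟩
    obtain ⟨s, hks, hs⟩ :=
      ih hy ((hU.inter hV).inter isOpen_compl_singleton) ⟨hyUV, hyx⟩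
    -- `x` is the only point of `D j` in `V`, so `j` is not counted near `y`
    have hjs : j ∉ s := fun hj' => by
      obtain ⟨z, ⟨⟨-, hzV⟩, hzx⟩, hzD⟩ := hs j hj'
      exact hzx (hVD.le ⟨hzV, hzD⟩)
    refine ⟨insert j s, by simpa [Finset.card_insert_of_notMem hjs], ?_⟩
    simp only [Finset.mem_insert, forall_eq_or_imp]
    exact ⟨⟨x, hxU, hj⟩, fun i hi => (hs i hi).mono fun z hz => ⟨hz.1.1.1, hz.2⟩⟩

theorem NDiscrete.cbDeriv_eq_empty [T1Space X] {ℓ : ℕ} (h : NDiscrete ℓ X) :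
    cbDeriv X ℓ = ∅ := by
  obtain ⟨D, hD, hcov⟩ := h
  refine eq_empty_of_forall_notMem fun x hx => ?_
  obtain ⟨s, hs, -⟩ :=
    exists_finset_lt_card_of_mem_cbDeriv hD hcov ℓ hx isOpen_univ (mem_univ x)
  exact hs.not_ge (s.card_le_univ.trans_eq (Fintype.card_fin ℓ))

theorem NDiscrete.scatteredSpace [T1Space X] {ℓ : ℕ} (h : NDiscrete ℓ X) : ScatteredSpace X :=
  ⟨ℓ, h.cbDeriv_eq_empty⟩

end Topology

namespace SuccOrder

variable {α : Type*} [LinearOrder α] [TopologicalSpace α] [OrderTopology α] [SuccOrder α]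
  [NoMaxOrder α]

theorem isClopen_Iic (a : α) : IsClopen (Iic a) :=
  ⟨isClosed_Iic, Order.Iio_succ a ▸ isOpen_Iio⟩

theorem isClopen_Ioc (a b : α) : IsClopen (Ioc a b) :=
  Ioi_inter_Iic (a := a) (b := b) ▸
    (compl_Iic (a := a) ▸ (isClopen_Iic a).compl).inter (isClopen_Iic b)

theorem exists_isClopen_mem_subset {x : α} {V : Set α} (hV : IsOpen V) (hx : x ∈ V) :
    ∃ W, IsClopen W ∧ x ∈ W ∧ W ⊆ V := by
  by_cases hlim : Order.IsSuccLimit x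
  · obtain ⟨a, hax, haV⟩ := isOpen_iff.1 hV x hx hlim
    refine ⟨Ioc a x, isClopen_Ioc a x, ⟨hax, le_rfl⟩, fun y hy => ?_⟩
    rcases hy.2.lt_or_eq with hyx | rfl
    exacts [haV ⟨hy.1, hyx⟩, hx]
  · exact ⟨{x}, ⟨isClosed_singleton, isOpen_singleton_iff.2 hlim⟩, rfl,
      singleton_subset_iff.2 hx⟩

theorem zeroDimensionalSpace : ZeroDimensionalSpace α :=
  isTopologicalBasis_of_isOpen_of_nhds (fun _ hW => hW.isOpen) fun _ _ hx hV =>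
    exists_isClopen_mem_subset hV hx

end SuccOrder

namespace Ordinal

instance countable_Iio_omega0_opow (n : ℕ) : Countable (Iio (ω ^ (n : Ordinal.{u}))) := by
  rw [← Cardinal.mk_le_aleph0_iff, Cardinal.mk_Iio_ordinal, ← Cardinal.lift_aleph0.{u + 1, u},
    Cardinal.lift_le]
  refine (card_opow_le _ _).trans ?_
  simp [Cardinal.natCast_lt_aleph0.le]

theorem exists_isOpen_singleton_of_nonempty {O : Ordinal} {S : Set (Iio O)} (hS : S.Nonempty) :
    ∃ x : S, IsOpen {x} := by
  obtain ⟨m, hmS, hmin⟩ := wellFounded_lt.has_min S hS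
  refine ⟨⟨m, hmS⟩, ?_⟩
  convert (SuccOrder.isClopen_Iic m.1).isOpen.preimage
    (continuous_subtype_val.comp (continuous_subtype_val (p := (· ∈ S))))
  ext y
  simp only [mem_singleton_iff, mem_preimage, Function.comp_apply, mem_Iic]
  refine ⟨fun h => h ▸ le_rfl, fun h => ?_⟩
  exact Subtype.ext (le_antisymm h (not_lt.1 (hmin y y.2)))

theorem discreteTopology_of_homogeneousSubspace {O : Ordinal} {S : Set (Iio O)}
    (hS : HomogeneousSubspace S) : DiscreteTopology S :=
  discreteTopology_iff_isOpen_singleton.2 fun y =>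
    let ⟨_, hx⟩ := exists_isOpen_singleton_of_nonempty ⟨y.1, y.2⟩
    HomogeneousSpace.isOpen_singleton hS hx y

theorem _root_.NHomogeneous.nDiscrete {O : Ordinal} {n : ℕ} (h : NHomogeneous n (Iio O)) :
    NDiscrete n (Iio O) :=
  let ⟨Y, hY, hcov⟩ := h
  ⟨Y, fun k => discreteTopology_of_homogeneousSubspace (hY k), hcov⟩

theorem isDiscrete_setOf_eq_mul_of_not_isSuccLimit {p : Ordinal} (hp : p ≠ 0) :
    IsDiscrete {x | ∃ c, ¬ Order.IsSuccLimit c ∧ x = p * c} := by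
  have hmono : StrictMono (p * ·) := (isNormal_mul_right (pos_iff_ne_zero.2 hp)).strictMono
  rw [isDiscrete_iff_forall_mem_exists_isOpen]
  rintro _ ⟨c, hc, rfl⟩
  rcases zero_or_succ_or_isSuccLimit c with rfl | ⟨d, rfl⟩ | hlim
  · refine ⟨Iic 0, (SuccOrder.isClopen_Iic 0).isOpen, ?_⟩
    ext y
    simp only [mem_inter_iff, mem_Iic, nonpos_iff_eq_zero, mul_zero, mem_singleton_iff]
    exact ⟨And.left, fun hy => ⟨hy, 0, not_isSuccLimit_zero, by rw [hy, mul_zero]⟩⟩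
  · refine ⟨Ioc (p * d) (p * Order.succ d), (SuccOrder.isClopen_Ioc _ _).isOpen, ?_⟩
    ext y
    constructor
    · rintro ⟨⟨hdy, hyd⟩, c, -, rfl⟩
      exact hyd.antisymm (mul_le_mul_right (Order.succ_le_of_lt (hmono.lt_iff_lt.1 hdy)) p)
    · rintro rfl
      exact ⟨⟨hmono (Order.lt_succ d), le_rfl⟩, _, Order.not_isSuccLimit_succ d, rfl⟩
  · exact absurd hlim hc

theorem exists_eq_omega0_opow_mul (n : ℕ) {x : Ordinal} (hx : x < ω ^ (n + 1)) :
    ∃ i ≤ n, ∃ c, ¬ Order.IsSuccLimit c ∧ x = ω ^ i * c := by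
  induction n generalizing x with
  | zero =>
    obtain ⟨m, rfl⟩ := lt_omega0.1 (by simpa using hx)
    refine ⟨0, le_rfl, m, fun h => ?_, by simp⟩
    exact (natCast_lt_omega0 m).not_ge (omega0_le_of_isSuccLimit h)
  | succ n ih =>
    by_cases hlim : Order.IsSuccLimit x
    · obtain ⟨e, rfl⟩ := isSuccPrelimit_iff_omega0_dvd.1 hlim.isSuccPrelimit
      rw [pow_succ' _ (n + 1)] at hx
      obtain ⟨i, hi, c, hc, rfl⟩ := ih ((mul_lt_mul_iff_right₀ omega0_pos).1 hx)
      exact ⟨i + 1, by omega, c, hc, by rw [pow_succ', mul_assoc]⟩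
    · exact ⟨0, (n + 1).zero_le, x, hlim, by simp⟩

theorem nDiscrete_Iio_omega0_opow {n : ℕ} (hn : 0 < n) :
    NDiscrete n (Iio (ω ^ (n : Ordinal))) := by
  obtain ⟨m, rfl⟩ := Nat.exists_eq_add_one.2 hn
  refine ⟨fun i => Subtype.val ⁻¹' {x | ∃ c, ¬ Order.IsSuccLimit c ∧ x = ω ^ (i : ℕ) * c},
    fun i => ?_, eq_univ_of_forall fun x => mem_iUnion.2 ?_⟩
  · exact ((isDiscrete_setOf_eq_mul_of_not_isSuccLimit (pow_ne_zero _ omega0_ne_zero)).preimage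
      continuous_subtype_val.continuousOn Subtype.val_injective).to_subtype
  · obtain ⟨i, hi, hx⟩ := exists_eq_omega0_opow_mul m (by rw [← opow_natCast]; exact x.2)
    exact ⟨⟨i, by omega⟩, hx⟩

theorem mem_cbDeriv_of_omega0_opow_dvd {O : Ordinal} (k : ℕ) {x : Iio O} (hx : x.1 ≠ 0)
    (hd : ω ^ k ∣ x.1) : x ∈ cbDeriv (Iio O) k := by
  induction k generalizing x with
  | zero => simp [cbDeriv_zero]
  | succ k ih =>
    rw [cbDeriv_natCast_succ]
    refine ⟨ih hx ((pow_dvd_pow _ k.le_succ).trans hd), mem_closure_iff.2 fun U hU hxU => ?_⟩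
    obtain ⟨V, hV, rfl⟩ := isOpen_induced_iff.1 hU
    obtain ⟨e, he⟩ := hd
    rw [pow_succ, mul_assoc] at he
    -- `x = ω ^ k * (ω * e)` is a limit of the points `ω ^ k * c` with `c < ω * e`
    have hc : Order.IsSuccLimit (ω * e) :=
      isSuccLimit_mul_left isSuccLimit_omega0 (pos_iff_ne_zero.2 (by rintro rfl; simp_all))
    have hpos : 0 < ω ^ k := pow_pos omega0_pos k
    obtain ⟨a, hax, haV⟩ :=
      SuccOrder.isOpen_iff.1 hV x.1 hxU (he ▸ isSuccLimit_mul_right hpos hc)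
    obtain ⟨c, hce, hac⟩ := (lt_mul_iff_of_isSuccLimit hc).1 (he ▸ hax)
    have hyx : ω ^ k * c < x.1 := he ▸ (mul_lt_mul_iff_right₀ hpos).2 hce
    exact ⟨⟨_, hyx.trans x.2⟩, haV ⟨hac, hyx⟩, ih (pos_of_gt hac).ne' (dvd_mul_right _ _),
      fun h => hyx.ne (congrArg Subtype.val h)⟩

theorem not_nDiscrete_Iio_omega0_opow {ℓ n : ℕ} (h : ℓ < n) :
    ¬ NDiscrete ℓ (Iio (ω ^ (n : Ordinal))) := by
  intro hD
  have hlt : ω ^ ℓ < ω ^ (n : Ordinal) := by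
    rw [opow_natCast]
    exact pow_lt_pow_right₀ one_lt_omega0 h
  exact hD.cbDeriv_eq_empty.subset (mem_cbDeriv_of_omega0_opow_dvd ℓ (x := ⟨ω ^ ℓ, hlt⟩)
    (pow_ne_zero _ omega0_ne_zero) dvd_rfl)

end Ordinal

/-- For every `0 < n < ω`, the ordinal `ω ^ n` with the order topology is a
zero-dimensional scattered separable metrizable space that is `n`-homogeneous but not
`ℓ`-homogeneous for any `ℓ < n`. -/
theorem omega_pow_n_homogeneous (n : ℕ) (hn : 0 < n) :
    ZeroDimensionalSpace ↥(Set.Iio (Ordinal.omega0 ^ (n : Ordinal))) ∧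
    ScatteredSpace ↥(Set.Iio (Ordinal.omega0 ^ (n : Ordinal))) ∧
    SeparableSpace ↥(Set.Iio (Ordinal.omega0 ^ (n : Ordinal))) ∧
    MetrizableSpace ↥(Set.Iio (Ordinal.omega0 ^ (n : Ordinal))) ∧
    NHomogeneous n ↥(Set.Iio (Ordinal.omega0 ^ (n : Ordinal))) ∧
    ∀ ℓ, ℓ < n → ¬ NHomogeneous ℓ ↥(Set.Iio (Ordinal.omega0 ^ (n : Ordinal))) := by
  exact ⟨SuccOrder.zeroDimensionalSpace.subtype _,
    (Ordinal.nDiscrete_Iio_omega0_opow hn).scatteredSpace, inferInstance, inferInstance,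
    (Ordinal.nDiscrete_Iio_omega0_opow hn).nHomogeneous,
    fun ℓ hℓ h => Ordinal.not_nDiscrete_Iio_omega0_opow hℓ h.nDiscrete⟩
end

section
/- For every positive natural number n, the ordinal ω^n (ordinal exponentiation) with the order topology is a scattered space of Cantor–Bendixson rank exactly n: its n-th Cantor–Bendixson derivative is empty while its (n−1)-st is not. -/
open TopologicalSpace MeasureTheory Topology

/-!
Since `Iio (ω ^ n)` is open, its Cantor–Bendixson derivatives are the traces of those of the
whole class of ordinals, where the finite-stage derivatives are iterates of `relDerivedSet`.
There, a point `x` survives one derivation of the set of multiples of `c` iff `x ≠ 0` and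
multiples of `c` are cofinal below `x`, i.e. iff `x` is a nonzero multiple of `c * ω`. Hence
the `k`-th derivative (`k ≥ 1`) consists of the nonzero multiples of `ω ^ k`: inside `ω ^ n`
there are none for `k = n`, while `ω ^ (n - 1)` survives `n - 1` derivations.
-/

open Set Filter Topology Order Ordinal

theorem cbDeriv_natCast (X : Type*) [TopologicalSpace X] (k : ℕ) :
    cbDeriv X k = relDerivedSet^[k] univ := by
  induction k with
  | zero => exact Ordinal.limitRecOn_zero ..
  | succ k ih =>
    rw [Function.iterate_succ_apply', ← ih, Nat.cast_succ, cbDeriv, Ordinal.limitRecOn_add_one]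
    ext x
    rw [relDerivedSet_apply, mem_inter_iff, mem_derivedSet, accPt_principal_iff_clusterPt,
      ← mem_closure_iff_clusterPt, and_comm]
    rfl

theorem derivedSet_sdiff_singleton {X : Type*} [TopologicalSpace X] [T1Space X]
    (A : Set X) (y : X) : derivedSet (A \ {y}) = derivedSet A := by
  ext x
  have hy : ∀ᶠ z in 𝓝[≠] x, z ≠ y := by
    rcases eq_or_ne x y with rfl | hxy
    · exact self_mem_nhdsWithin
    · exact eventually_ne_nhdsWithin hxy
  simp only [mem_derivedSet, accPt_iff_frequently_nhdsNE, Set.mem_sdiff, mem_singleton_iff]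
  exact ⟨fun h => h.mono fun _ => And.left, fun h => h.and_eventually hy⟩

theorem relDerivedSet_sdiff_singleton {X : Type*} [TopologicalSpace X] [T1Space X]
    (A : Set X) (y : X) : relDerivedSet (A \ {y}) = relDerivedSet A \ {y} := by
  simp only [relDerivedSet_apply, derivedSet_sdiff_singleton, inter_sdiff_assoc]

theorem Topology.IsOpenEmbedding.iterate_relDerivedSet_preimage {X Y : Type*}
    [TopologicalSpace X] [TopologicalSpace Y] {f : X → Y} (hf : IsOpenEmbedding f)
    (A : Set Y) (k : ℕ) :
    relDerivedSet^[k] (f ⁻¹' A) = f ⁻¹' relDerivedSet^[k] A := by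
  have hf' : ∀ B : Set Y, f ⁻¹' relDerivedSet B = relDerivedSet (f ⁻¹' B) := fun B => by
    ext x
    simp only [relDerivedSet_apply, mem_inter_iff, mem_preimage, mem_derivedSet,
      ← comap_principal, hf.accPt_comap_iff]
  exact (Function.Semiconj.iterate_right (f := preimage f) hf' k A).symm

theorem IsOpen.cbDeriv_subtype_natCast {X : Type*} [TopologicalSpace X] {s : Set X}
    (hs : IsOpen s) (k : ℕ) : cbDeriv s k = Subtype.val ⁻¹' relDerivedSet^[k] univ := by
  rw [cbDeriv_natCast, ← preimage_univ,
    hs.isOpenEmbedding_subtypeVal.iterate_relDerivedSet_preimage]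

namespace Ordinal

theorem mul_omega0_dvd_iff {c x : Ordinal} :
    c * ω ∣ x ↔ c ∣ x ∧ ∀ a < x, ∃ b, c ∣ b ∧ a < b ∧ b < x := by
  rcases eq_or_ne c 0 with rfl | hc
  · simp +contextual [zero_dvd_iff]
  have hc₀ : 0 < c := pos_iff_ne_zero.2 hc
  constructor
  · rintro ⟨d, rfl⟩
    rw [mul_assoc]
    refine ⟨dvd_mul_right _ _, fun a ha => ⟨c * succ (a / c), dvd_mul_right _ _,
      lt_mul_succ_div a hc, (mul_lt_mul_iff_right₀ hc₀).2 ?_⟩⟩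
    have hd : d ≠ 0 := by rintro rfl; simp at ha
    exact (isSuccLimit_mul_left isSuccLimit_omega0 (pos_iff_ne_zero.2 hd)).succ_lt
      ((lt_mul_iff_div_lt hc).1 ha)
  · rintro ⟨⟨q, rfl⟩, h⟩
    suffices ω ∣ q from mul_dvd_mul_left c this
    rw [← isSuccPrelimit_iff_omega0_dvd]
    intro r hr
    obtain ⟨_, ⟨s, rfl⟩, hrs, hsq⟩ := h (c * r) ((mul_lt_mul_iff_right₀ hc₀).2 hr.lt)
    exact hr.2 ((mul_lt_mul_iff_right₀ hc₀).1 hrs) ((mul_lt_mul_iff_right₀ hc₀).1 hsq)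

theorem relDerivedSet_setOf_dvd (c : Ordinal) :
    relDerivedSet {x | c ∣ x} = {x | c * ω ∣ x} \ {0} := by
  ext x
  simp only [relDerivedSet_apply, mem_inter_iff, mem_derivedSet, SuccOrder.accPt_principal,
    isMin_iff_eq_bot, bot_eq_zero, mem_ofPred_eq, Set.mem_sdiff, mem_singleton_iff,
    mul_omega0_dvd_iff, Set.Nonempty, mem_Ioo]
  tauto

theorem iterate_succ_relDerivedSet_univ (k : ℕ) :
    relDerivedSet^[k + 1] (Set.univ : Set Ordinal) = {x | ω ^ (k + 1) ∣ x} \ {0} := by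
  induction k with
  | zero => simpa using relDerivedSet_setOf_dvd 1
  | succ k ih =>
    rw [Function.iterate_succ_apply', ih, relDerivedSet_sdiff_singleton,
      relDerivedSet_setOf_dvd, ← pow_succ, sdiff_idem]

theorem omega0_pow_mem_iterate_relDerivedSet_univ (k : ℕ) :
    ω ^ k ∈ relDerivedSet^[k] (Set.univ : Set Ordinal) := by
  cases k with
  | zero => trivial
  | succ k =>
    rw [iterate_succ_relDerivedSet_univ]
    exact ⟨dvd_rfl, pow_ne_zero _ omega0_ne_zero⟩

end Ordinal

/-- For every `0 < n < ω`, the ordinal `ω ^ n` with the order topology is scattered of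
Cantor–Bendixson rank exactly `n`: its `n`-th Cantor–Bendixson derivative is empty while
its `(n-1)`-st is not. -/
theorem omega_pow_n_cantor_bendixson_rank (n : ℕ) (hn : 0 < n) :
    cbDeriv ↥(Set.Iio (Ordinal.omega0 ^ (n : Ordinal))) (n : Ordinal) = ∅ ∧
    cbDeriv ↥(Set.Iio (Ordinal.omega0 ^ (n : Ordinal))) ((n - 1 : ℕ) : Ordinal) ≠ ∅ := by
  obtain ⟨m, rfl⟩ : ∃ m, n = m + 1 := ⟨n - 1, by omega⟩
  rw [Nat.add_sub_cancel, isOpen_Iio.cbDeriv_subtype_natCast, isOpen_Iio.cbDeriv_subtype_natCast,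
    Ordinal.iterate_succ_relDerivedSet_univ, opow_natCast, opow_natCast]
  refine ⟨eq_empty_of_forall_notMem fun x ⟨hdvd, hx⟩ => ?_, ?_⟩
  · exact (Ordinal.le_of_dvd hx hdvd).not_gt x.2
  · exact Nonempty.ne_empty ⟨⟨ω ^ m, pow_lt_pow_right₀ one_lt_omega0 m.lt_add_one⟩,
      Ordinal.omega0_pow_mem_iterate_relDerivedSet_univ m⟩
end
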